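/- arXiv:2001.11179 — 2 statements merged into one kernel-verified Lean document; each statement's English description precedes it below -/
import Mathlib

section
/- Let L be the matrix-valued Laplacian of a matrix-weighted graph on n nodes with symmetric positive semidefinite edge weights. Then the following are equivalent: (i) for every initial state x(0) ∈ ℝ^{dn}, the solution x(t) = exp(−tL) x(0) converges as t → ∞ to the average consensus value x_f = 1_n ⊗ ((1/n) Σ_{i=1}^n x_i(0)); (ii) null(L) = R, the consensus subspace. -/
open Matrix Finset Filter

/-- The matrix-valued Laplacian of a matrix-weighted graph on `n` nodes with
state dimension `d`: the `(i,j)` off-diagonal block is `-A i j` and the `i`-th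
diagonal block is `∑ k ≠ i, A i k`. -/
noncomputable def mwLaplacian {n d : ℕ} (A : Fin n → Fin n → Matrix (Fin d) (Fin d) ℝ) :
    Matrix (Fin n × Fin d) (Fin n × Fin d) ℝ :=
  fun p q =>
    if p.1 = q.1 then ∑ k ∈ Finset.univ.erase p.1, A p.1 k p.2 q.2
    else -(A p.1 q.1 p.2 q.2)

/-- Membership in the consensus subspace `R = range (1ₙ ⊗ I_d)`:
all blocks of `x` are equal. -/
def isConsensus {n d : ℕ} (x : Fin n × Fin d → ℝ) : Prop :=
  ∃ v : Fin d → ℝ, ∀ p : Fin n × Fin d, x p = v p.2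

/-- The Euclidean norm on `ι → ℝ`. -/
noncomputable def euclNorm {ι : Type*} [Fintype ι] (x : ι → ℝ) : ℝ :=
  Real.sqrt (x ⬝ᵥ x)

/-! The Laplacian is symmetric with quadratic form `½ ∑ i j, (xᵢ - xⱼ)ᵀ Aᵢⱼ (xᵢ - xⱼ)`, hence
positive semidefinite, and it annihilates the consensus subspace. In an orthonormal eigenbasis of
`L`, the flow `exp (-tL)` fixes `null L` and damps every eigendirection with positive eigenvalue,
so `exp (-tL) x₀` tends to the component of `x₀` in `null L`. The average `x_f` is a consensus
vector and `x₀ - x_f` is orthogonal to every consensus vector, so if `null L = R` the limit is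
`x_f`. Conversely, a vector of `null L` is fixed by the flow, so convergence forces it to equal
its own average, a consensus vector. -/

open scoped Topology

namespace Matrix

variable {ι : Type*} [Fintype ι] [DecidableEq ι]

theorem pow_mulVec_of_mulVec_eq_smul {R : Type*} [CommSemiring R] {M : Matrix ι ι R}
    {v : ι → R} {c : R} (h : M *ᵥ v = c • v) (k : ℕ) :
    (M ^ k) *ᵥ v = c ^ k • v := by
  induction k with
  | zero => simp
  | succ k ih => rw [pow_succ', ← mulVec_mulVec, ih, mulVec_smul, h, smul_smul, pow_succ]

theorem exp_mulVec_of_mulVec_eq_smul {M : Matrix ι ι ℝ} {v : ι → ℝ} {c : ℝ}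
    (h : M *ᵥ v = c • v) : NormedSpace.exp M *ᵥ v = Real.exp c • v := by
  let _ : NormedRing (Matrix ι ι ℝ) := Matrix.linftyOpNormedRing
  let _ : NormedAlgebra ℝ (Matrix ι ι ℝ) := Matrix.linftyOpNormedAlgebra
  have hM := (NormedSpace.exp_series_hasSum_exp' (𝕂 := ℝ) M).map
    (mulVec.addMonoidHomLeft v) (continuous_id.matrix_mulVec continuous_const)
  have hc := (NormedSpace.exp_series_hasSum_exp' (𝕂 := ℝ) c).smul_const v
  rw [← Real.exp_eq_exp_ℝ] at hc
  refine hM.unique (hc.congr_fun fun k => ?_)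
  change ((k.factorial : ℝ)⁻¹ • M ^ k) *ᵥ v = _
  rw [smul_mulVec, pow_mulVec_of_mulVec_eq_smul h, smul_smul, smul_eq_mul]

theorem exp_neg_smul_mulVec_of_mulVec_eq_smul {L : Matrix ι ι ℝ} {v : ι → ℝ} {c : ℝ}
    (h : L *ᵥ v = c • v) (t : ℝ) :
    NormedSpace.exp (-(t • L)) *ᵥ v = Real.exp (-(t * c)) • v :=
  exp_mulVec_of_mulVec_eq_smul <| by rw [neg_mulVec, smul_mulVec, h, smul_smul, neg_smul]

theorem exp_neg_smul_mulVec_of_mulVec_eq_zero {L : Matrix ι ι ℝ} {v : ι → ℝ}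
    (h : L *ᵥ v = 0) (t : ℝ) : NormedSpace.exp (-(t • L)) *ᵥ v = v := by
  simpa using exp_neg_smul_mulVec_of_mulVec_eq_smul (c := 0) (h.trans (zero_smul ℝ v).symm) t

theorem tendsto_exp_neg_smul_mulVec_zero {L : Matrix ι ι ℝ} (hL : L.PosSemidef) {w : ι → ℝ}
    (hw : ∀ z, L *ᵥ z = 0 → z ⬝ᵥ w = 0) :
    Tendsto (fun t : ℝ => NormedSpace.exp (-(t • L)) *ᵥ w) atTop (𝓝 0) := by
  set u := hL.isHermitian.eigenvectorBasis
  set μ := hL.isHermitian.eigenvalues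
  have hw_sum : w = ∑ k, (u k ⬝ᵥ w) • ⇑(u k) := by
    simpa [EuclideanSpace.inner_eq_star_dotProduct, dotProduct_comm] using
      congrArg WithLp.ofLp (u.sum_repr' (WithLp.toLp 2 w)).symm
  have hterm : ∀ k, Tendsto (fun t : ℝ => (u k ⬝ᵥ w * Real.exp (-(t * μ k))) • ⇑(u k))
      atTop (𝓝 0) := by
    intro k
    rcases (hL.eigenvalues_nonneg k).eq_or_lt with hμ | hμ
    · have hker : L *ᵥ u k = 0 := by
        rw [hL.isHermitian.mulVec_eigenvectorBasis, ← hμ, zero_smul]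
      simp [hw _ hker]
    · have hexp : Tendsto (fun t : ℝ => Real.exp (-(t * μ k))) atTop (𝓝 0) :=
        Real.tendsto_exp_atBot.comp <| tendsto_neg_atTop_atBot.comp <|
          tendsto_id.atTop_mul_const hμ
      simpa using (hexp.const_mul (u k ⬝ᵥ w)).smul_const (u k : ι → ℝ)
  have hexp : ∀ t k, NormedSpace.exp (-(t • L)) *ᵥ u k = Real.exp (-(t * μ k)) • ⇑(u k) :=
    fun t k => exp_neg_smul_mulVec_of_mulVec_eq_smul (hL.isHermitian.mulVec_eigenvectorBasis k) t
  rw [hw_sum]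
  simpa only [mulVec_sum, mulVec_smul, hexp, smul_smul, sum_const_zero] using
    tendsto_finsetSum univ fun k _ => hterm k

theorem tendsto_exp_neg_smul_mulVec {L : Matrix ι ι ℝ} (hL : L.PosSemidef) {x y : ι → ℝ}
    (hy : L *ᵥ y = 0) (hxy : ∀ z, L *ᵥ z = 0 → z ⬝ᵥ (x - y) = 0) :
    Tendsto (fun t : ℝ => NormedSpace.exp (-(t • L)) *ᵥ x) atTop (𝓝 y) := by
  have h := (tendsto_const_nhds (x := y)).add (tendsto_exp_neg_smul_mulVec_zero hL hxy)
  rw [add_zero] at h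
  refine h.congr fun t => ?_
  rw [mulVec_sub, exp_neg_smul_mulVec_of_mulVec_eq_zero hy, add_sub_cancel]

end Matrix

noncomputable def consensusAverage {n d : ℕ} (x : Fin n × Fin d → ℝ) : Fin n × Fin d → ℝ :=
  fun p => (n : ℝ)⁻¹ * ∑ i : Fin n, x (i, p.2)

theorem isConsensus_consensusAverage {n d : ℕ} (x : Fin n × Fin d → ℝ) :
    isConsensus (consensusAverage x) :=
  ⟨fun b => (n : ℝ)⁻¹ * ∑ i : Fin n, x (i, b), fun _ => rfl⟩

theorem dotProduct_sub_consensusAverage_eq_zero {n d : ℕ} {z : Fin n × Fin d → ℝ}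
    (hz : isConsensus z) (x : Fin n × Fin d → ℝ) : z ⬝ᵥ (x - consensusAverage x) = 0 := by
  obtain ⟨v, hv⟩ := hz
  simp only [dotProduct, Fintype.sum_prod_type, hv, Pi.sub_apply, consensusAverage]
  rw [sum_comm]
  refine sum_eq_zero fun b _ => ?_
  rw [← mul_sum, sum_sub_distrib, sum_const, card_univ, Fintype.card_fin, nsmul_eq_mul]
  rcases eq_or_ne n 0 with rfl | hn
  · simp
  · rw [mul_inv_cancel_left₀ (Nat.cast_ne_zero.2 hn), sub_self, mul_zero]

section MatrixWeightedLaplacian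

variable {n d : ℕ} (A : Fin n → Fin n → Matrix (Fin d) (Fin d) ℝ)

theorem mwLaplacian_mulVec_apply (x : Fin n × Fin d → ℝ) (i : Fin n) (a : Fin d) :
    (mwLaplacian A *ᵥ x) (i, a) =
      ∑ j, (A i j *ᵥ (Function.curry x i - Function.curry x j)) a := by
  rw [← add_sum_erase _ _ (mem_univ i), sub_self, mulVec_zero, Pi.zero_apply, zero_add]
  simp only [mulVec, dotProduct, Fintype.sum_prod_type, mwLaplacian]
  rw [← add_sum_erase _ _ (mem_univ i)]
  simp only [if_true]
  have hoff : ∀ j ∈ univ.erase i, ∑ b, (if i = j then ∑ k ∈ univ.erase i, A i k a b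
      else -A i j a b) * x (j, b) = -∑ b, A i j a b * x (j, b) := fun j hj => by
    simp [if_neg (ne_of_mem_erase hj).symm]
  rw [sum_congr rfl hoff]
  simp only [Pi.sub_apply, Function.curry_apply, mul_sub, sum_sub_distrib, sum_mul, sum_neg_distrib]
  rw [sum_comm]
  ring

theorem mwLaplacian_mulVec_eq_zero_of_isConsensus {x : Fin n × Fin d → ℝ} (hx : isConsensus x) :
    mwLaplacian A *ᵥ x = 0 := by
  obtain ⟨v, hv⟩ := hx
  have hblock : ∀ j, Function.curry x j = v := fun j => funext fun b => hv (j, b)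
  ext ⟨i, a⟩
  simp [mwLaplacian_mulVec_apply, hblock]

theorem mwLaplacian_isHermitian (hA : ∀ i j, (A i j).IsHermitian) (hsym : ∀ i j, A i j = A j i) :
    (mwLaplacian A).IsHermitian := by
  refine IsHermitian.ext fun ⟨i, a⟩ ⟨j, b⟩ => ?_
  simp only [mwLaplacian, star_trivial]
  by_cases hij : j = i
  · subst hij
    simp only [if_true]
    exact sum_congr rfl fun k _ => by simpa using (hA j k).apply a b
  · rw [if_neg hij, if_neg (Ne.symm hij), hsym j i]
    simpa using congrArg Neg.neg ((hA i j).apply a b)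

theorem two_mul_dotProduct_mwLaplacian_mulVec (hsym : ∀ i j, A i j = A j i)
    (x : Fin n × Fin d → ℝ) :
    2 * (x ⬝ᵥ mwLaplacian A *ᵥ x) = ∑ i, ∑ j,
      (Function.curry x i - Function.curry x j) ⬝ᵥ
        A i j *ᵥ (Function.curry x i - Function.curry x j) := by
  set δ : Fin n → Fin n → Fin d → ℝ := fun i j => Function.curry x i - Function.curry x j
  have hQ : x ⬝ᵥ mwLaplacian A *ᵥ x = ∑ i, ∑ j, Function.curry x i ⬝ᵥ A i j *ᵥ δ i j := by
    simp only [dotProduct, Fintype.sum_prod_type, mwLaplacian_mulVec_apply, mul_sum]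
    exact sum_congr rfl fun i _ => sum_comm
  have hswap : ∑ i, ∑ j, Function.curry x i ⬝ᵥ A i j *ᵥ δ i j =
      -∑ i, ∑ j, Function.curry x j ⬝ᵥ A i j *ᵥ δ i j := by
    rw [sum_comm, ← sum_neg_distrib]
    refine sum_congr rfl fun i _ => ?_
    rw [← sum_neg_distrib]
    refine sum_congr rfl fun j _ => ?_
    rw [hsym j i, show δ j i = -δ i j from (neg_sub _ _).symm, mulVec_neg, dotProduct_neg]
  calc 2 * (x ⬝ᵥ mwLaplacian A *ᵥ x)
      = ∑ i, ∑ j, Function.curry x i ⬝ᵥ A i j *ᵥ δ i j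
        - ∑ i, ∑ j, Function.curry x j ⬝ᵥ A i j *ᵥ δ i j := by
        rw [two_mul, hQ]; nth_rewrite 2 [hswap]; ring
    _ = ∑ i, ∑ j, δ i j ⬝ᵥ A i j *ᵥ δ i j := by
        simp only [δ, sub_dotProduct, sum_sub_distrib]

theorem mwLaplacian_posSemidef (hpsd : ∀ i j, (A i j).PosSemidef) (hsym : ∀ i j, A i j = A j i) :
    (mwLaplacian A).PosSemidef := by
  refine .of_dotProduct_mulVec_nonneg
    (mwLaplacian_isHermitian A (fun i j => (hpsd i j).isHermitian) hsym) fun x => ?_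
  have hsum := two_mul_dotProduct_mwLaplacian_mulVec A hsym x
  have hnonneg : 0 ≤ ∑ i, ∑ j, (Function.curry x i - Function.curry x j) ⬝ᵥ
      A i j *ᵥ (Function.curry x i - Function.curry x j) :=
    sum_nonneg fun i _ => sum_nonneg fun j _ => by
      simpa using (hpsd i j).dotProduct_mulVec_nonneg (Function.curry x i - Function.curry x j)
  rw [star_trivial]
  linarith

end MatrixWeightedLaplacian

theorem average_consensus_iff_null_eq_consensus_general {n d : ℕ}
    (A : Fin n → Fin n → Matrix (Fin d) (Fin d) ℝ)
    (hpsd : ∀ i j, (A i j).PosSemidef)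
    (hsym : ∀ i j, A i j = A j i) :
    (∀ x0 : Fin n × Fin d → ℝ,
        Tendsto (fun t : ℝ => (NormedSpace.exp (-(t • mwLaplacian A))).mulVec x0)
          atTop (nhds (fun p => (n : ℝ)⁻¹ * ∑ i : Fin n, x0 (i, p.2))))
      ↔ (∀ x : Fin n × Fin d → ℝ, (mwLaplacian A).mulVec x = 0 ↔ isConsensus x) := by
  constructor
  · intro hconv x
    refine ⟨fun hx => ?_, mwLaplacian_mulVec_eq_zero_of_isConsensus A⟩
    have hfixed : x = consensusAverage x := by
      refine tendsto_nhds_unique ?_ (hconv x)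
      simp only [exp_neg_smul_mulVec_of_mulVec_eq_zero hx, tendsto_const_nhds]
    exact hfixed ▸ isConsensus_consensusAverage x
  · intro hker x0
    exact tendsto_exp_neg_smul_mulVec (mwLaplacian_posSemidef A hpsd hsym)
      (mwLaplacian_mulVec_eq_zero_of_isConsensus A (isConsensus_consensusAverage x0))
      fun z hz => dotProduct_sub_consensusAverage_eq_zero ((hker z).1 hz) x0

/-- For a matrix-weighted time-invariant network, the consensus flow
`x(t) = exp(-tL) x(0)` converges to the average consensus value
`x_f = 1ₙ ⊗ ((1/n) ∑ i, x_i(0))` for every initial state if and only if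
`null(L) = R`, the consensus subspace. -/
theorem average_consensus_iff_null_eq_consensus {n d : ℕ} (hn : 2 ≤ n) (hd : 1 ≤ d)
    (A : Fin n → Fin n → Matrix (Fin d) (Fin d) ℝ)
    (hpsd : ∀ i j, (A i j).PosSemidef)
    (hsym : ∀ i j, A i j = A j i)
    (hdiag : ∀ i, A i i = 0) :
    (∀ x0 : Fin n × Fin d → ℝ,
        Tendsto (fun t : ℝ => (NormedSpace.exp (-(t • mwLaplacian A))).mulVec x0)
          atTop (nhds (fun p => (n : ℝ)⁻¹ * ∑ i : Fin n, x0 (i, p.2))))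
      ↔ (∀ x : Fin n × Fin d → ℝ, (mwLaplacian A).mulVec x = 0 ↔ isConsensus x) :=
  average_consensus_iff_null_eq_consensus_general A hpsd hsym
end

section
/- Consider a switched matrix-weighted network on n nodes: for each k ∈ ℕ let L^k be a matrix-valued Laplacian (symmetric positive semidefinite with R ⊆ null(L^k)) and let the dwell times satisfy Δt_k ∈ [α, β] with 0 < α ≤ β. Suppose there exists a strictly increasing sequence of indices k_0 = 0 < k_1 < k_2 < ⋯ such that for every l ∈ ℕ the null space of Σ_{k=k_l}^{k_{l+1}−1} Δt_k L^k equals R, and suppose there exists 0 < q < 1 such that for every l, the transition matrix Φ_l = exp(−Δt_{k_{l+1}−1} L^{k_{l+1}−1}) ··· exp(−Δt_{k_l} L^{k_l}) satisfies ‖Φ_l x‖² ≤ q ‖x‖² for every x orthogonal to R (i.e., μ_{d+1}(Φ_l^T Φ_l) ≤ q). Then for every initial state x_0 ∈ ℝ^{dn}, the sequence defined by x_{k+1} = exp(−Δt_k L^k) x_k converges to the average consensus value x_f = 1_n ⊗ ((1/n) Σ_{i=1}^n (x_0)_i). -/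
/-!
The disagreement `x_k - x_f` with the average `x_f` stays orthogonal to the consensus subspace
`R`: every factor `exp (-Δt_k L^k)` is symmetric and fixes `R` pointwise (as `R ⊆ ker L^k`), and
`x_0 - x_f ⊥ R` because `x_f` is the orthogonal projection of `x_0` onto `R`. Each factor is
nonexpansive, since `exp (-Δt_k L^k)² ≤ 1` when `L^k` is positive semidefinite, so the squared
norm of the disagreement is antitone; over each block `[k_l, k_{l+1})` it shrinks by the factor
`q`. Hence it is `O(q^l)` along `k_l`, and by monotonicity it tends to `0` along the whole
sequence.
-/

open Matrix Finset Filter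

/-- The state of the switched system at switching instants:
`x_0 = x0`, `x_{k+1} = E k ⬝ x_k`. -/
noncomputable def stateSeq {ι : Type*} [Fintype ι] [DecidableEq ι]
    (E : ℕ → Matrix ι ι ℝ) (x0 : ι → ℝ) : ℕ → ι → ℝ
  | 0 => x0
  | k + 1 => (E k).mulVec (stateSeq E x0 k)

/-- The transition matrix `E (a+j-1) * ⋯ * E (a+1) * E a` (the ordered product of
`j` consecutive factors starting at index `a`). -/
noncomputable def transMat {ι : Type*} [Fintype ι] [DecidableEq ι]
    (E : ℕ → Matrix ι ι ℝ) (a : ℕ) : ℕ → Matrix ι ι ℝ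
  | 0 => 1
  | j + 1 => E (a + j) * transMat E a j

namespace Matrix

variable {ι : Type*} [Fintype ι] [DecidableEq ι]

-- Any matrix norm would do: it only serves to apply the Banach-algebra theory of `exp`.
open scoped Norms.L2Operator MatrixOrder

theorem exp_mulVec_of_mulVec_eq_zero {M : Matrix ι ι ℝ} {c : ι → ℝ} (h : M *ᵥ c = 0) :
    NormedSpace.exp M *ᵥ c = c := by
  have hexp := (NormedSpace.exp_series_hasSum_exp' (𝕂 := ℝ) M).map
    (mulVec.addMonoidHomLeft c) (continuous_id.matrix_mulVec continuous_const)
  refine hexp.unique (hasSum_single 0 fun k hk => ?_) |>.trans ?_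
  · obtain ⟨k, rfl⟩ := Nat.exists_eq_succ_of_ne_zero hk
    change (((k + 1).factorial : ℝ)⁻¹ • M ^ (k + 1) : Matrix ι ι ℝ) *ᵥ c = 0
    rw [smul_mulVec, pow_succ, ← mulVec_mulVec, h, mulVec_zero, smul_zero]
  · simp [mulVec.addMonoidHomLeft]

theorem PosSemidef.isSymm_exp_neg {M : Matrix ι ι ℝ} (hM : M.PosSemidef) :
    (NormedSpace.exp (-M)).IsSymm :=
  (isHermitian_iff_isSymm.mp hM.isHermitian).neg.exp

theorem PosSemidef.exp_neg_mul_self_le_one {M : Matrix ι ι ℝ} (hM : M.PosSemidef) :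
    NormedSpace.exp (-M) * NormedSpace.exp (-M) ≤ 1 := by
  have hE : NormedSpace.exp (-M) = cfc (fun t => Real.exp (-t)) M := by
    rw [cfc_comp_neg _ _, CFC.real_exp_eq_normedSpace_exp (a := -M) hM.isHermitian.neg]
  rw [hE, ← cfc_mul _ _ M]
  refine cfc_le_one _ M fun t ht => ?_
  have ht0 : 0 ≤ t := spectrum_nonneg_of_nonneg hM.nonneg ht
  rw [← Real.exp_add]
  exact Real.exp_le_one_iff.mpr (by linarith)

theorem PosSemidef.dotProduct_exp_neg_mulVec_le {M : Matrix ι ι ℝ} (hM : M.PosSemidef)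
    (x : ι → ℝ) :
    (NormedSpace.exp (-M) *ᵥ x) ⬝ᵥ (NormedSpace.exp (-M) *ᵥ x) ≤ x ⬝ᵥ x := by
  have h := (le_iff.mp hM.exp_neg_mul_self_le_one).dotProduct_mulVec_nonneg x
  rw [star_trivial, sub_mulVec, one_mulVec, dotProduct_sub, sub_nonneg, ← mulVec_mulVec] at h
  rwa [dotProduct_mulVec, ← mulVec_transpose, hM.isSymm_exp_neg.eq] at h

end Matrix

theorem tendsto_zero_of_tendsto_dotProduct_self {α ι : Type*} [Fintype ι] {l : Filter α}
    {z : α → ι → ℝ} (h : Tendsto (fun a => z a ⬝ᵥ z a) l (nhds 0)) : Tendsto z l (nhds 0) := by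
  have hsqrt : Tendsto (fun a => √(z a ⬝ᵥ z a)) l (nhds 0) := by simpa using h.sqrt
  refine tendsto_pi_nhds.mpr fun i => squeeze_zero_norm (fun a => ?_) hsqrt
  rw [Real.norm_eq_abs, ← Real.sqrt_sq_eq_abs, sq]
  exact Real.sqrt_le_sqrt (Finset.single_le_sum (f := fun j => z a j * z a j)
    (fun j _ => mul_self_nonneg _) (Finset.mem_univ i))

section Trajectory

variable {ι : Type*} [Fintype ι] [DecidableEq ι] {E : ℕ → Matrix ι ι ℝ}

theorem stateSeq_add (x : ι → ℝ) (a j : ℕ) :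
    stateSeq E x (a + j) = transMat E a j *ᵥ stateSeq E x a := by
  induction j with
  | zero => simp [transMat]
  | succ j ih => rw [← add_assoc, stateSeq, ih, transMat, mulVec_mulVec]

theorem stateSeq_eq_stateSeq_sub_add {c : ι → ℝ} (hc : ∀ k, E k *ᵥ c = c) (x : ι → ℝ) (k : ℕ) :
    stateSeq E x k = stateSeq E (x - c) k + c := by
  induction k with
  | zero => simp [stateSeq]
  | succ k ih => rw [stateSeq, stateSeq, ih, mulVec_add, hc]

theorem stateSeq_dotProduct_eq_zero (hE : ∀ k, (E k).IsSymm) {x y : ι → ℝ}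
    (hy : ∀ k, E k *ᵥ y = y) (hxy : x ⬝ᵥ y = 0) (k : ℕ) : stateSeq E x k ⬝ᵥ y = 0 := by
  induction k with
  | zero => exact hxy
  | succ k ih => rw [stateSeq, dotProduct_comm, dotProduct_mulVec, ← mulVec_transpose,
      (hE k).eq, hy, dotProduct_comm, ih]

theorem antitone_stateSeq_dotProduct_self
    (hE : ∀ k x, (E k *ᵥ x) ⬝ᵥ (E k *ᵥ x) ≤ x ⬝ᵥ x) (x : ι → ℝ) :
    Antitone fun k => stateSeq E x k ⬝ᵥ stateSeq E x k :=
  antitone_nat_of_succ_le fun k => hE k (stateSeq E x k)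

theorem tendsto_stateSeq_zero_of_contraction_along
    (hE : ∀ k x, (E k *ᵥ x) ⬝ᵥ (E k *ᵥ x) ≤ x ⬝ᵥ x) {ks : ℕ → ℕ} (hks : StrictMono ks)
    (hks0 : ks 0 = 0) {q : ℝ} (hq0 : 0 ≤ q) (hq1 : q < 1) {x : ι → ℝ}
    (hcontr : ∀ l, (transMat E (ks l) (ks (l + 1) - ks l) *ᵥ stateSeq E x (ks l)) ⬝ᵥ
        (transMat E (ks l) (ks (l + 1) - ks l) *ᵥ stateSeq E x (ks l)) ≤
      q * (stateSeq E x (ks l) ⬝ᵥ stateSeq E x (ks l))) :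
    Tendsto (stateSeq E x) atTop (nhds 0) := by
  set N : ℕ → ℝ := fun k => stateSeq E x k ⬝ᵥ stateSeq E x k with hN
  have hstep (l : ℕ) : N (ks (l + 1)) ≤ q * N (ks l) := by
    have h := stateSeq_add (E := E) x (ks l) (ks (l + 1) - ks l)
    rw [Nat.add_sub_cancel' (hks (Nat.lt_succ_self l)).le] at h
    simpa only [hN, h] using hcontr l
  have hgeom (l : ℕ) : N (ks l) ≤ q ^ l * N 0 := by
    induction l with
    | zero => simp [hks0]
    | succ l ih =>
      calc N (ks (l + 1)) ≤ q * N (ks l) := hstep l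
        _ ≤ q * (q ^ l * N 0) := by gcongr
        _ = q ^ (l + 1) * N 0 := by ring
  have hsub : Tendsto (N ∘ ks) atTop (nhds 0) :=
    squeeze_zero (fun l => dotProduct_self_star_nonneg _) hgeom
      (by simpa using (tendsto_pow_atTop_nhds_zero_of_lt_one hq0 hq1).mul_const (N 0))
  exact tendsto_zero_of_tendsto_dotProduct_self <|
    (tendsto_iff_tendsto_subseq_of_antitone (antitone_stateSeq_dotProduct_self hE x)
      hks.tendsto_atTop).mpr hsub

end Trajectory

section Consensus

variable {n d : ℕ}

noncomputable def blockAverage (x : Fin n × Fin d → ℝ) : Fin n × Fin d → ℝ :=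
  fun p => (n : ℝ)⁻¹ * ∑ i : Fin n, x (i, p.2)

theorem isConsensus_blockAverage (x : Fin n × Fin d → ℝ) : isConsensus (blockAverage x) :=
  ⟨fun j => (n : ℝ)⁻¹ * ∑ i : Fin n, x (i, j), fun _ => rfl⟩

theorem sub_blockAverage_dotProduct_eq_zero (hn : n ≠ 0) (x : Fin n × Fin d → ℝ)
    {y : Fin n × Fin d → ℝ} (hy : isConsensus y) : (x - blockAverage x) ⬝ᵥ y = 0 := by
  obtain ⟨v, hv⟩ := hy
  have hblock (j : Fin d) : ∑ i : Fin n, (x (i, j) - blockAverage x (i, j)) = 0 := by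
    simp only [blockAverage, Finset.sum_sub_distrib, Finset.sum_const, Finset.card_univ,
      Fintype.card_fin, nsmul_eq_mul]
    field_simp
    ring
  simp only [dotProduct, hv, Pi.sub_apply, Fintype.sum_prod_type_right, ← Finset.sum_mul,
    hblock, zero_mul, Finset.sum_const_zero]

end Consensus

theorem null_subsequence_contraction_implies_average_consensus_general
    {n d : ℕ} (hn : 2 ≤ n)
    (L : ℕ → Matrix (Fin n × Fin d) (Fin n × Fin d) ℝ) (Δt : ℕ → ℝ) (α β : ℝ)
    (hα : 0 < α) (hΔ : ∀ k, Δt k ∈ Set.Icc α β)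
    (hpsd : ∀ k, (L k).PosSemidef)
    (hR : ∀ k, ∀ x : Fin n × Fin d → ℝ, isConsensus x → (L k).mulVec x = 0)
    (ks : ℕ → ℕ) (hks0 : ks 0 = 0) (hksmono : StrictMono ks)
    (q : ℝ) (hq0 : 0 < q) (hq1 : q < 1)
    (hcontr : ∀ l : ℕ, ∀ x : Fin n × Fin d → ℝ,
      (∀ y : Fin n × Fin d → ℝ, isConsensus y → x ⬝ᵥ y = 0) →
      ((transMat (fun k => NormedSpace.exp (-(Δt k • L k))) (ks l)
          (ks (l + 1) - ks l)).mulVec x) ⬝ᵥ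
        ((transMat (fun k => NormedSpace.exp (-(Δt k • L k))) (ks l)
          (ks (l + 1) - ks l)).mulVec x) ≤ q * (x ⬝ᵥ x)) :
    ∀ x0 : Fin n × Fin d → ℝ,
      Tendsto (stateSeq (fun k => NormedSpace.exp (-(Δt k • L k))) x0) atTop
        (nhds (fun p => (n : ℝ)⁻¹ * ∑ i : Fin n, x0 (i, p.2))) := by
  intro x0
  set E : ℕ → Matrix (Fin n × Fin d) (Fin n × Fin d) ℝ :=
    fun k => NormedSpace.exp (-(Δt k • L k))
  have hM (k : ℕ) : (Δt k • L k).PosSemidef := (hpsd k).smul (hα.le.trans (hΔ k).1)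
  have hfix (k : ℕ) {y} (hy : isConsensus y) : E k *ᵥ y = y :=
    exp_mulVec_of_mulVec_eq_zero (by rw [neg_mulVec, smul_mulVec, hR k y hy, smul_zero, neg_zero])
  have hperp (k : ℕ) {y} (hy : isConsensus y) :
      stateSeq E (x0 - blockAverage x0) k ⬝ᵥ y = 0 :=
    stateSeq_dotProduct_eq_zero (fun k => (hM k).isSymm_exp_neg) (fun k => hfix k hy)
      (sub_blockAverage_dotProduct_eq_zero (by omega) x0 hy) k
  have hdisagreement : Tendsto (stateSeq E (x0 - blockAverage x0)) atTop (nhds 0) :=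
    tendsto_stateSeq_zero_of_contraction_along (fun k => (hM k).dotProduct_exp_neg_mulVec_le)
      hksmono hks0 hq0.le hq1 fun l => hcontr l _ fun _ => hperp _
  change Tendsto _ atTop (nhds (blockAverage x0))
  rw [funext (stateSeq_eq_stateSeq_sub_add (fun k => hfix k (isConsensus_blockAverage x0)) x0)]
  simpa only [zero_add] using hdisagreement.add_const (blockAverage x0)

/-- For a switched matrix-weighted network with Laplacians `L^k`
(symmetric PSD, `R ⊆ null(L^k)`) and dwell times `Δt k ∈ [α, β]`, `0 < α ≤ β`:
if there is a strictly increasing index sequence `k_0 = 0 < k_1 < ⋯` with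
`null(∑_{k=k_l}^{k_{l+1}-1} Δt_k L^k) = R` for every `l`, and a scalar `0 < q < 1`
such that every transition matrix `Φ_l` over `[k_l, k_{l+1})` satisfies
`‖Φ_l x‖² ≤ q ‖x‖²` for all `x ⊥ R` (i.e. `μ_{d+1}(Φ_lᵀ Φ_l) ≤ q`), then every
initial state converges to its average consensus value. -/
theorem null_subsequence_contraction_implies_average_consensus
    {n d : ℕ} (hn : 2 ≤ n) (hd : 1 ≤ d)
    (L : ℕ → Matrix (Fin n × Fin d) (Fin n × Fin d) ℝ) (Δt : ℕ → ℝ) (α β : ℝ)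
    (hα : 0 < α) (hαβ : α ≤ β) (hΔ : ∀ k, Δt k ∈ Set.Icc α β)
    (hpsd : ∀ k, (L k).PosSemidef)
    (hR : ∀ k, ∀ x : Fin n × Fin d → ℝ, isConsensus x → (L k).mulVec x = 0)
    (ks : ℕ → ℕ) (hks0 : ks 0 = 0) (hksmono : StrictMono ks)
    (hnull : ∀ l : ℕ, ∀ x : Fin n × Fin d → ℝ,
      ((∑ k ∈ Finset.Ico (ks l) (ks (l + 1)), Δt k • L k).mulVec x = 0
        ↔ isConsensus x))
    (q : ℝ) (hq0 : 0 < q) (hq1 : q < 1)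
    (hcontr : ∀ l : ℕ, ∀ x : Fin n × Fin d → ℝ,
      (∀ y : Fin n × Fin d → ℝ, isConsensus y → x ⬝ᵥ y = 0) →
      ((transMat (fun k => NormedSpace.exp (-(Δt k • L k))) (ks l)
          (ks (l + 1) - ks l)).mulVec x) ⬝ᵥ
        ((transMat (fun k => NormedSpace.exp (-(Δt k • L k))) (ks l)
          (ks (l + 1) - ks l)).mulVec x) ≤ q * (x ⬝ᵥ x)) :
    ∀ x0 : Fin n × Fin d → ℝ,
      Tendsto (stateSeq (fun k => NormedSpace.exp (-(Δt k • L k))) x0) atTop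
        (nhds (fun p => (n : ℝ)⁻¹ * ∑ i : Fin n, x0 (i, p.2))) :=
  null_subsequence_contraction_implies_average_consensus_general hn L Δt α β hα hΔ hpsd hR ks hks0
    hksmono q hq0 hq1 hcontr
end
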